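/- arXiv:1407.1723 — 6 statements merged into one kernel-verified Lean document; each statement's English description precedes it below -/
import Mathlib

section
/- Consider minimizing (c/2)‖u‖² - (1/2)‖u‖² for c > 1 (unique minimizer û = 0) with the primal-dual algorithm with F(g) = -(1/2)‖g‖², G(u) = (c/2)‖u‖², K = I, θ = 0, and any step sizes τ > 0 and 1 < σ < 2. Then eliminating q via qⁿ = -gⁿ, the iteration becomes the linear map (gⁿ⁺¹, uⁿ⁺¹) = A(gⁿ, uⁿ) with A = [[-1/(σ-1), σ/(σ-1)], [-1/((τ⁻¹+c)(σ-1)), τ⁻¹/(τ⁻¹+c) + σ/((τ⁻¹+c)(σ-1))]], and for every σ < 2 and τ > 0 there exists c > 1 such that A has a real eigenvalue d with d < -1; hence the sequences (gⁿ) and (uⁿ) diverge for appropriately chosen initial data. -/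
open Filter Topology

set_option maxHeartbeats 2000000

/-- Necessity of the step-size condition `σ ≥ 2ω`: for the problem
`min_u (c/2)u² - (1/2)u²` with `F(g) = -g²/2`, `G(u) = (c/2)u²`, `K = I`, `θ = 0`,
eliminating `q` via `qⁿ = -gⁿ` turns the PDHG iteration into the linear map `A`;
for every `1 < σ < 2` and `τ > 0` there is a `c > 1` such that `A` has a real
eigenvalue `d < -1`, and hence there are sequences satisfying the recurrence whose
`g`- and `u`-components are unbounded. -/
theorem pdhg_divergence_example
    (σ τ : ℝ) (hσ1 : 1 < σ) (hσ2 : σ < 2) (hτ : 0 < τ) :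
    ∃ c : ℝ, 1 < c ∧
      ∀ A : Matrix (Fin 2) (Fin 2) ℝ,
        A = !![-(1 / (σ - 1)), σ / (σ - 1);
               -(1 / ((τ⁻¹ + c) * (σ - 1))),
               τ⁻¹ / (τ⁻¹ + c) + σ / ((τ⁻¹ + c) * (σ - 1))] →
        ((∀ g u : ℕ → ℝ,
            (∀ n, g (n + 1) = -(1 / (σ - 1)) * g n + σ / (σ - 1) * u n) →
            (∀ n, u (n + 1) = (1 / (τ⁻¹ + c)) * g (n + 1) + (τ⁻¹ / (τ⁻¹ + c)) * u n) →
            ∀ n, ![g (n + 1), u (n + 1)] = A.mulVec ![g n, u n]) ∧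
         (∃ d : ℝ, d < -1 ∧ ∃ x : Fin 2 → ℝ, x ≠ 0 ∧ A.mulVec x = d • x) ∧
         (∃ g u : ℕ → ℝ,
            (∀ n, g (n + 1) = -(1 / (σ - 1)) * g n + σ / (σ - 1) * u n) ∧
            (∀ n, u (n + 1) = (1 / (τ⁻¹ + c)) * g (n + 1) + (τ⁻¹ / (τ⁻¹ + c)) * u n) ∧
            ¬ (∃ M : ℝ, ∀ n, |g n| ≤ M) ∧ ¬ (∃ M : ℝ, ∀ n, |u n| ≤ M))) := by
  have hσ0 : (0:ℝ) < σ - 1 := by linarith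
  have hσ' : σ - 1 ≠ 0 := ne_of_gt hσ0
  have hτi : (0:ℝ) < τ⁻¹ := inv_pos.mpr hτ
  set a : ℝ := -(1/(σ-1)) with ha
  set b : ℝ := σ/(σ-1) with hb
  clear_value a b
  have hb0 : 0 < b := hb ▸ div_pos (by linarith) hσ0
  have ha0 : a < 0 := by
    have : (0:ℝ) < 1/(σ-1) := by positivity
    rw [ha]; linarith
  obtain ⟨ε, hε⟩ : ∃ ε : ℝ, ε = (2-σ)/(σ-1) := ⟨_, rfl⟩
  have hε0 : 0 < ε := hε ▸ div_pos (by linarith) hσ0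
  have hε' : ε ≠ 0 := ne_of_gt hε0
  have h1 : 1 + a = -ε := by rw [ha, hε]; field_simp; ring
  obtain ⟨N, hN⟩ : ∃ N : ℝ, N = b + τ⁻¹ + a*τ⁻¹ := ⟨_, rfl⟩
  have habs : 0 ≤ |N|/ε := div_nonneg (abs_nonneg N) hε0.le
  refine ⟨2 + |N|/ε, by linarith, ?_⟩
  set c : ℝ := 2 + |N|/ε with hc
  clear_value c
  set s : ℝ := τ⁻¹ + c with hs
  clear_value s
  have hs0 : 0 < s := by rw [hs, hc]; linarith
  have hs' : s ≠ 0 := ne_of_gt hs0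
  have hNs : N/s < ε := by
    have hval : ε * s = ε*τ⁻¹ + 2*ε + |N| := by
      rw [hs, hc]; field_simp; ring
    have h2 : N < ε * s := by
      have := mul_pos hε0 hτi
      have := le_abs_self N
      linarith
    exact (div_lt_iff₀ hs0).mpr (by linarith)
  set T : ℝ := a + (b+τ⁻¹)/s with hT
  set D : ℝ := a*τ⁻¹/s with hD
  clear_value T D
  have hD0 : D < 0 := hD ▸ div_neg_of_neg_of_pos (mul_neg_of_neg_of_pos ha0 hτi) hs0
  have hTD : T + D = a + N/s := by rw [hT, hD, hN]; field_simp; ring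
  have hkey : 1 + T + D < 0 := by linarith
  set r : ℝ := Real.sqrt (T^2 - 4*D) with hr
  clear_value r
  have hdisc : 0 < T^2 - 4*D := by nlinarith [sq_nonneg T]
  have hr2 : r^2 = T^2 - 4*D := by rw [hr]; exact Real.sq_sqrt hdisc.le
  have hr0 : 0 < r := by rw [hr]; exact Real.sqrt_pos.mpr hdisc
  set d : ℝ := (T - r)/2 with hd
  clear_value d
  have hchar : d^2 - T*d + D = 0 := by rw [hd]; linear_combination hr2 / 4
  have hd1 : d < -1 := by
    have h2 : (T+2)^2 < r^2 := by nlinarith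
    have h3 : T + 2 < r := by nlinarith
    rw [hd]; linarith
  have hchar' : s*d^2 - (s*a + b + τ⁻¹)*d + a*τ⁻¹ = 0 := by
    have h := hchar
    rw [hT, hD] at h
    field_simp at h ⊢
    linarith
  have hda : d ≠ a := by
    intro h
    have hpa : a^2 - T*a + D = -(a*b)/s := by rw [hT, hD]; field_simp; ring
    have hpos : 0 < -(a*b)/s := by
      have h0 : 0 < -a * b := mul_pos (neg_pos.mpr ha0) hb0
      have h0' : 0 < -(a*b) := by linarith [h0]; 
      exact div_pos h0' hs0
    rw [h, hpa] at hchar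
    linarith
  intro A hA
  refine ⟨?_, ⟨d, hd1, ![b, d-a], ?_, ?_⟩, ?_⟩
  · intro g u hg hu n
    subst hA
    funext i
    fin_cases i
    · simp [Matrix.mulVec, dotProduct, Fin.sum_univ_two, hg n]
    · simp [Matrix.mulVec, dotProduct, Fin.sum_univ_two]
      rw [hu n, hg n, ha, hb]
      field_simp
      ring
  · intro h
    have := congrFun h 0
    simp at this
    exact absurd this (ne_of_gt hb0)
  · subst hA
    funext i
    fin_cases i
    · simp [Matrix.mulVec, dotProduct, Fin.sum_univ_two]
      ring
    · simp [Matrix.mulVec, dotProduct, Fin.sum_univ_two]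
      have hstep : s*(d*(d-a)) = a*b + (b+τ⁻¹)*(d-a) := by linear_combination hchar'
      have hgoal : d*(d-a) = (a*b + (b+τ⁻¹)*(d-a))/s := by
        rw [eq_div_iff hs']; linarith [hstep]
      rw [hgoal, ha, hb]
      field_simp
      ring
  · refine ⟨fun n => d^n * b, fun n => d^n * (d - a), ?_, ?_, ?_, ?_⟩
    · intro n; ring
    · intro n
      have key : s*(d*(d-a)) = d*b + τ⁻¹*(d-a) := by linear_combination hchar'
      have key2 : d*(d-a) = (d*b + τ⁻¹*(d-a))/s := by
        rw [eq_div_iff hs']; linarith [key]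
      show d^(n+1) * (d-a) = 1/s * (d^(n+1) * b) + τ⁻¹/s * (d^n * (d-a))
      calc d^(n+1) * (d-a) = d^n * (d*(d-a)) := by ring
        _ = d^n * ((d*b + τ⁻¹*(d-a))/s) := by rw [key2]
        _ = 1/s * (d^(n+1) * b) + τ⁻¹/s * (d^n * (d-a)) := by field_simp; ring
    · rintro ⟨M, hM⟩
      have hd' : 1 < |d| := by
        rw [abs_of_neg (by linarith : d < 0)]; linarith
      obtain ⟨n, hn⟩ := pow_unbounded_of_one_lt (M/b) hd'
      have h1' : M < |d|^n * b := by
        rw [div_lt_iff₀ hb0] at hn; linarith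
      have h2 : |d^n * b| = |d|^n * b := by
        rw [abs_mul, abs_pow, abs_of_pos hb0]
      have := hM n
      rw [h2] at this
      linarith
    · rintro ⟨M, hM⟩
      have hd' : 1 < |d| := by
        rw [abs_of_neg (by linarith : d < 0)]; linarith
      have hda0 : 0 < |d - a| := abs_pos.mpr (sub_ne_zero.mpr hda)
      obtain ⟨n, hn⟩ := pow_unbounded_of_one_lt (M/|d-a|) hd'
      have h1' : M < |d|^n * |d-a| := by
        rw [div_lt_iff₀ hda0] at hn; linarith
      have h2 : |d^n * (d-a)| = |d|^n * |d-a| := by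
        rw [abs_mul, abs_pow]
      have := hM n
      rw [h2] at this
      linarith
end

section
/- For the problem min_u (c/2)‖u‖² - (1/2)‖Ku‖² with K = (1,1)ᵀ : ℝ → ℝ², c > 2, apply the primal-dual algorithm with F(g) = -(1/2)‖g‖₂² on ℝ², θ = 0, starting from u⁰ = 0, q⁰ = (-1, 1). Then the iterates satisfy uⁿ = 0 for all n, gⁿ⁺¹ = (σ-1)⁻¹qⁿ and qⁿ⁺¹ = -gⁿ⁺¹, so gⁿ⁺¹ = (-1)ⁿ(σ-1)⁻⁽ⁿ⁺¹⁾q⁰; in particular for 1 < σ < 2 the primal iterates uⁿ converge (are identically 0) while ‖gⁿ‖ → ∞. -/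
/-!
Since `K` has rank one, `⟪K x, q⟫ = x ⟪K 1, q⟫`. As long as `uⁿ = 0`, the dual step is the
minimisation of the strongly convex quadratic `((σ-1)/2)‖g‖² - ⟪g, qⁿ⟫`, so `gⁿ⁺¹ = (σ-1)⁻¹qⁿ`
and `qⁿ⁺¹ = -(σ-1)⁻¹qⁿ`; hence `qⁿ⁺¹` stays a multiple of `q⁰ ⟂ K 1`, the primal objective
reduces to `(1/(2τ) + c/2) u²`, and `uⁿ⁺¹ = 0`. For `1 < σ < 2` the ratio `(σ-1)⁻¹` exceeds `1`.
-/

open Filter Topology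

section InnerProductSpace

variable {E : Type*} [NormedAddCommGroup E] [InnerProductSpace ℝ E]

theorem quadratic_sub_quadratic_inv_smul {α : ℝ} (hα : α ≠ 0) (b x : E) :
    (α / 2 * ‖x‖ ^ 2 - inner ℝ x b) - (α / 2 * ‖α⁻¹ • b‖ ^ 2 - inner ℝ (α⁻¹ • b) b) =
      α / 2 * ‖x - α⁻¹ • b‖ ^ 2 := by
  rw [norm_sub_sq_real, real_inner_smul_right, real_inner_smul_left, norm_smul,
    real_inner_self_eq_norm_sq, mul_pow, Real.norm_eq_abs, sq_abs]
  field_simp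
  ring

theorem eq_inv_smul_of_forall_quadratic_le {α : ℝ} (hα : 0 < α) {b x : E}
    (h : ∀ y : E, α / 2 * ‖x‖ ^ 2 - inner ℝ x b ≤ α / 2 * ‖y‖ ^ 2 - inner ℝ y b) :
    x = α⁻¹ • b := by
  have hsq : α / 2 * ‖x - α⁻¹ • b‖ ^ 2 ≤ 0 := by
    rw [← quadratic_sub_quadratic_inv_smul hα.ne']
    linarith [h (α⁻¹ • b)]
  have : ‖x - α⁻¹ • b‖ ^ 2 = 0 :=
    le_antisymm (nonpos_of_mul_nonpos_right hsq (by positivity)) (sq_nonneg _)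
  simpa [sub_eq_zero] using this

variable {σ τ c : ℝ} {K : ℝ →L[ℝ] E}

theorem inner_apply_eq_mul_inner_one (x : ℝ) (p : E) :
    inner ℝ (K x) p = x * inner ℝ (K 1) p := by
  rw [← real_inner_smul_left, ← map_smul, smul_eq_mul, mul_one]

theorem dual_step_eq_inv_smul (hσ : 1 < σ) {x p : E}
    (h : ∀ y : E, σ / 2 * ‖x‖ ^ 2 - inner ℝ x p + (-(1 / 2) * ‖x‖ ^ 2) ≤
      σ / 2 * ‖y‖ ^ 2 - inner ℝ y p + (-(1 / 2) * ‖y‖ ^ 2)) :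
    x = (σ - 1)⁻¹ • p :=
  eq_inv_smul_of_forall_quadratic_le (by linarith) fun y => by linarith [h y]

theorem dual_update_eq_neg_inv_smul (hσ : σ ≠ 1) (p : E) :
    p + σ • (0 - (σ - 1)⁻¹ • p) = -(σ - 1)⁻¹ • p := by
  have : σ - 1 ≠ 0 := sub_ne_zero.mpr hσ
  rw [zero_sub, smul_neg, smul_smul, ← sub_eq_add_neg]
  nth_rewrite 1 [← one_smul ℝ p]
  rw [← sub_smul]
  congr 1
  field_simp
  ring

theorem primal_step_eq_zero (hτ : 0 < τ) (hc : 0 < c) {x : ℝ} {p : E}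
    (hp : inner ℝ (K 1) p = 0)
    (h : ∀ y : ℝ, 1 / (2 * τ) * x ^ 2 + inner ℝ (K x) p + c / 2 * x ^ 2 ≤
      1 / (2 * τ) * y ^ 2 + inner ℝ (K y) p + c / 2 * y ^ 2) :
    x = 0 := by
  have h0 := h 0
  rw [map_zero, inner_zero_left, inner_apply_eq_mul_inner_one x p, hp] at h0
  have : (1 / (2 * τ) + c / 2) * x ^ 2 ≤ 0 := by linarith
  exact pow_eq_zero_iff two_ne_zero |>.mp <|
    le_antisymm (nonpos_of_mul_nonpos_right this (by positivity)) (sq_nonneg x)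

theorem pdhg_iterates_of_inner_eq_zero (hσ : 1 < σ) (hτ : 0 < τ) (hc : 0 < c)
    {u : ℕ → ℝ} {g q : ℕ → E} (hu0 : u 0 = 0) (hq0 : inner ℝ (K 1) (q 0) = 0)
    (hg : ∀ n, ∀ g' : E,
      σ / 2 * ‖g (n + 1) - K (u n)‖ ^ 2 - inner ℝ (g (n + 1)) (q n)
          + (-(1 / 2) * ‖g (n + 1)‖ ^ 2) ≤
        σ / 2 * ‖g' - K (u n)‖ ^ 2 - inner ℝ g' (q n) + (-(1 / 2) * ‖g'‖ ^ 2))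
    (hq : ∀ n, q (n + 1) = q n + σ • (K (u n) - g (n + 1)))
    (hu : ∀ n, ∀ u' : ℝ,
      1 / (2 * τ) * (u (n + 1) - u n) ^ 2 + inner ℝ (K (u (n + 1))) (q (n + 1))
          + c / 2 * (u (n + 1)) ^ 2 ≤
        1 / (2 * τ) * (u' - u n) ^ 2 + inner ℝ (K u') (q (n + 1)) + c / 2 * u' ^ 2)
    (n : ℕ) :
    u n = 0 ∧ g (n + 1) = (σ - 1)⁻¹ • q n ∧ q n = (-(σ - 1)⁻¹) ^ n • q 0 := by
  induction n with
  | zero =>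
    refine ⟨hu0, dual_step_eq_inv_smul hσ fun y => ?_, by simp⟩
    simpa only [hu0, map_zero, sub_zero] using hg 0 y
  | succ n ih =>
    obtain ⟨hun, hgn, hqn⟩ := ih
    have hqn' : q (n + 1) = (-(σ - 1)⁻¹) ^ (n + 1) • q 0 := by
      rw [hq n, hun, map_zero, hgn, dual_update_eq_neg_inv_smul hσ.ne', hqn, smul_smul, pow_succ']
    have hun' : u (n + 1) = 0 := by
      refine primal_step_eq_zero (K := K) (p := q (n + 1)) hτ hc ?_ fun y => ?_
      · rw [hqn', real_inner_smul_right, hq0, mul_zero]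
      · simpa only [hun, sub_zero] using hu n y
    refine ⟨hun', dual_step_eq_inv_smul hσ fun y => ?_, hqn'⟩
    simpa only [hun', map_zero, sub_zero] using hg (n + 1) y

end InnerProductSpace

theorem tendsto_norm_atTop_of_norm_succ_eq {F : Type*} [NormedAddCommGroup F] {f : ℕ → F}
    {r C : ℝ} (hr : 1 < r) (hC : 0 < C) (h : ∀ n, ‖f (n + 1)‖ = r ^ (n + 1) * C) :
    Tendsto (fun n => ‖f n‖) atTop atTop := by
  rw [← tendsto_add_atTop_iff_nat 1, funext h]
  exact ((tendsto_pow_atTop_atTop_of_one_lt hr).comp (tendsto_add_atTop_nat 1)).atTop_mul_const hC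

/-- Example where the primal iterates converge but the `g`-iterates diverge: for
`min_u (c/2)u² - (1/2)‖Ku‖²` with `K = (1,1)ᵀ`, `c > 2`, `F(g) = -(1/2)‖g‖²`, `θ = 0`,
`u⁰ = 0`, `q⁰ = (-1,1)`, the iterates satisfy `uⁿ = 0`, `gⁿ⁺¹ = (σ-1)⁻¹qⁿ`,
`qⁿ⁺¹ = -gⁿ⁺¹`, hence `gⁿ⁺¹ = (-1)ⁿ(σ-1)^{-(n+1)}q⁰`; for `1 < σ < 2` the `uⁿ`
are identically `0` while `‖gⁿ‖ → ∞`. -/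
theorem pdhg_u_converges_g_diverges
    (σ τ c : ℝ) (hσ1 : 1 < σ) (hτ : 0 < τ) (hc : 2 < c)
    (K : ℝ →L[ℝ] EuclideanSpace ℝ (Fin 2))
    (hK : ∀ x : ℝ, K x = (WithLp.equiv 2 (Fin 2 → ℝ)).symm ![x, x])
    (u : ℕ → ℝ) (g q : ℕ → EuclideanSpace ℝ (Fin 2))
    (hu0 : u 0 = 0) (hq0 : q 0 = (WithLp.equiv 2 (Fin 2 → ℝ)).symm ![-1, 1])
    (hg : ∀ n, ∀ g' : EuclideanSpace ℝ (Fin 2),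
      σ / 2 * ‖g (n + 1) - K (u n)‖ ^ 2 - (inner ℝ (g (n + 1)) (q n) : ℝ)
          + (-(1 / 2) * ‖g (n + 1)‖ ^ 2) ≤
        σ / 2 * ‖g' - K (u n)‖ ^ 2 - (inner ℝ g' (q n) : ℝ) + (-(1 / 2) * ‖g'‖ ^ 2))
    (hq : ∀ n, q (n + 1) = q n + σ • (K (u n) - g (n + 1)))
    (hu : ∀ n, ∀ u' : ℝ,
      1 / (2 * τ) * (u (n + 1) - u n) ^ 2 + (inner ℝ (K (u (n + 1))) (q (n + 1)) : ℝ)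
          + c / 2 * (u (n + 1)) ^ 2 ≤
        1 / (2 * τ) * (u' - u n) ^ 2 + (inner ℝ (K u') (q (n + 1)) : ℝ) + c / 2 * u' ^ 2) :
    (∀ n, u n = 0) ∧
    (∀ n, g (n + 1) = (σ - 1)⁻¹ • q n) ∧
    (∀ n, q (n + 1) = -g (n + 1)) ∧
    (∀ n : ℕ, g (n + 1) = ((-1 : ℝ) ^ n * (σ - 1) ^ (-(n + 1 : ℤ))) • q 0) ∧
    (σ < 2 → Filter.Tendsto (fun n => ‖g n‖) Filter.atTop Filter.atTop) := by
  have hσ0 : 0 < σ - 1 := by linarith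
  have horth : inner ℝ (K 1) (q 0) = 0 := by
    simp [hK, hq0, PiLp.inner_apply, Fin.sum_univ_two]
  have hq0_ne : q 0 ≠ 0 := fun h => by simpa [hq0] using congr_arg (· 0) h
  have hiter := pdhg_iterates_of_inner_eq_zero hσ1 hτ (by linarith) hu0 horth hg hq hu
  have hg_closed (n : ℕ) : g (n + 1) = ((σ - 1)⁻¹ * (-(σ - 1)⁻¹) ^ n) • q 0 := by
    rw [(hiter n).2.1, (hiter n).2.2, smul_smul]
  refine ⟨fun n => (hiter n).1, fun n => (hiter n).2.1, fun n => ?_, fun n => ?_, fun hσ2 => ?_⟩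
  · rw [(hiter (n + 1)).2.2, hg_closed, pow_succ', neg_mul, neg_smul]
  · rw [hg_closed, show -(n + 1 : ℤ) = -((n + 1 : ℕ) : ℤ) by push_cast; ring, zpow_neg,
      zpow_natCast, neg_pow, pow_succ, mul_inv, inv_pow]
    ring_nf
  · refine tendsto_norm_atTop_of_norm_succ_eq ((one_lt_inv₀ hσ0).mpr (by linarith))
      (norm_pos_iff.mpr hq0_ne) fun n => ?_
    rw [hg_closed, norm_smul, norm_mul, norm_pow, norm_neg, Real.norm_of_nonneg (by positivity),
      pow_succ']
end

section
/- Let F : Y → ℝ be differentiable with ‖∇F(g)‖ ≤ b for all g, and let G be such that there exist a > 0 and t > b‖K‖ with G((1+ε)u) ≥ G(u) + tε‖u‖ for all ε ≥ 0 and all u with ‖u‖ ≥ a. Then the iterates (uⁿ, qⁿ, gⁿ) of the primal-dual algorithm (with ‖u⁰‖ < a) remain bounded, and hence converge along subsequences. -/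
/-!
The optimality condition of the `g`-step says exactly that `qⁿ⁺¹ = ∇F(gⁿ⁺¹)`, so `‖qⁿ‖ ≤ b`
for `n ≥ 1`. If the `u`-step moved `uⁿ` out of a ball of radius `r ≥ a` to `w`, compare the
objective at `w` with its value at `s • w` for `s` slightly below `1`: the growth of `G` gains
`t (1 - s) ‖w‖`, while the proximal and coupling terms cost at most
`(1 - s)² ‖w‖² / (2τ) + b ‖K‖ (1 - s) ‖w‖`, which is smaller because `t > b ‖K‖`. So the ball of
radius `max a ‖u⁰‖` is invariant; `ūⁿ` and, through the `q`-update, `gⁿ` are then bounded as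
well, and Bolzano–Weierstrass gives the convergent subsequence.
-/

open Filter InnerProductSpace
open scoped RealInnerProductSpace

theorem gradient_eq_of_forall_prox_le {Y : Type*} [NormedAddCommGroup Y] [InnerProductSpace ℝ Y]
    [CompleteSpace Y] {F : Y → ℝ} {σ : ℝ} {c p m : Y} (hF : DifferentiableAt ℝ F m)
    (hmin : ∀ y, σ / 2 * ‖m - c‖ ^ 2 - ⟪m, p⟫ + F m ≤ σ / 2 * ‖y - c‖ ^ 2 - ⟪y, p⟫ + F y) :
    gradient F m = p + σ • (c - m) := by
  have hderiv : HasFDerivAt (fun y ↦ σ / 2 * ‖y - c‖ ^ 2 - ⟪p, y⟫ + F y)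
      (toDual ℝ Y (σ • (m - c) - p + gradient F m)) m := by
    have hsq := ((hasFDerivAt_id m).sub_const c).norm_sq.const_mul (σ / 2)
    refine ((hsq.sub (innerSL ℝ p).hasFDerivAt).add hF.hasGradientAt.hasFDerivAt).congr_fderiv ?_
    ext y
    simp only [id_eq, map_sub, ContinuousLinearMap.comp_id, toDual_gradient, add_apply,
      sub_apply, smul_apply, coe_innerSL_apply, nsmul_eq_mul,
      Nat.cast_ofNat, smul_eq_mul, map_add, map_smul, toDual_apply_apply, add_left_inj, sub_left_inj]
    ring
  have hloc : IsLocalMin (fun y ↦ σ / 2 * ‖y - c‖ ^ 2 - ⟪p, y⟫ + F y) m :=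
    Eventually.of_forall fun y ↦ by simpa only [real_inner_comm p] using hmin y
  have hzero := hloc.hasFDerivAt_eq_zero hderiv
  rw [LinearIsometryEquiv.map_eq_zero_iff] at hzero
  linear_combination (norm := module) hzero

section ProxStep

variable {X Y : Type*} [NormedAddCommGroup X] [InnerProductSpace ℝ X]
  [NormedAddCommGroup Y] [InnerProductSpace ℝ Y] {K : X →L[ℝ] Y} {G : X → ℝ} {a b r t s τ : ℝ}
  {q : Y} {x w : X}

theorem add_mul_norm_le_of_growth
    (hG : ∀ u : X, ‖u‖ ≥ a → ∀ ε : ℝ, 0 ≤ ε → G ((1 + ε) • u) ≥ G u + t * ε * ‖u‖)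
    (hs0 : 0 < s) (hs1 : s ≤ 1) (ha : a ≤ ‖s • w‖) :
    G (s • w) + t * ((1 - s) * ‖w‖) ≤ G w := by
  have hε : 0 ≤ s⁻¹ - 1 := sub_nonneg.2 (one_le_inv₀ hs0 |>.2 hs1)
  have hw : (1 + (s⁻¹ - 1)) • s • w = w := by
    rw [add_sub_cancel, smul_smul, inv_mul_cancel₀ hs0.ne', one_smul]
  have hgrowth := hG (s • w) ha _ hε
  rw [hw, norm_smul, Real.norm_of_nonneg hs0.le] at hgrowth
  have hcoef : (s⁻¹ - 1) * (s * ‖w‖) = (1 - s) * ‖w‖ := by field_simp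
  rw [mul_assoc t, hcoef] at hgrowth
  exact hgrowth

theorem sub_le_of_forall_prox_le (hτ : 0 < τ) (hq : ‖q‖ ≤ b) (hxw : 0 ≤ ⟪w - x, w⟫)
    (hs : s ≤ 1)
    (hmin : ∀ u', 1 / (2 * τ) * ‖w - x‖ ^ 2 + ⟪K w, q⟫ + G w ≤
      1 / (2 * τ) * ‖u' - x‖ ^ 2 + ⟪K u', q⟫ + G u') :
    G w - G (s • w) ≤ 1 / (2 * τ) * ((1 - s) * ‖w‖) ^ 2 + b * ‖K‖ * ((1 - s) * ‖w‖) := by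
  have hdist : ‖s • w - x‖ ^ 2 = ‖w - x‖ ^ 2 - 2 * (1 - s) * ⟪w - x, w⟫ + ((1 - s) * ‖w‖) ^ 2 := by
    rw [show s • w - x = (w - x) - (1 - s) • w by module, norm_sub_sq_real, real_inner_smul_right,
      norm_smul, Real.norm_of_nonneg (sub_nonneg.2 hs)]
    ring
  have hpair : ⟪K (s • w), q⟫ = ⟪K w, q⟫ - (1 - s) * ⟪K w, q⟫ := by
    rw [map_smul, real_inner_smul_left]; ring
  have hKwq : -⟪K w, q⟫ ≤ b * ‖K‖ * ‖w‖ := calc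
    -⟪K w, q⟫ ≤ ‖K w‖ * ‖q‖ := (neg_le_abs _).trans (abs_real_inner_le_norm _ _)
    _ ≤ ‖K‖ * ‖w‖ * b := mul_le_mul (K.le_opNorm w) hq (norm_nonneg _) (by positivity)
    _ = b * ‖K‖ * ‖w‖ := by ring
  have hdrop : 0 ≤ 1 / (2 * τ) * (2 * (1 - s) * ⟪w - x, w⟫) := by
    have := sub_nonneg.2 hs
    positivity
  have hlin := mul_le_mul_of_nonneg_left hKwq (sub_nonneg.2 hs)
  have := hmin (s • w)
  rw [hdist, hpair] at this
  linarith

theorem norm_le_of_forall_prox_le (hτ : 0 < τ) (ht : b * ‖K‖ < t) (hq : ‖q‖ ≤ b)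
    (hG : ∀ u : X, ‖u‖ ≥ a → ∀ ε : ℝ, 0 ≤ ε → G ((1 + ε) • u) ≥ G u + t * ε * ‖u‖)
    (har : a ≤ r) (hx : ‖x‖ ≤ r)
    (hmin : ∀ u', 1 / (2 * τ) * ‖w - x‖ ^ 2 + ⟪K w, q⟫ + G w ≤
      1 / (2 * τ) * ‖u' - x‖ ^ 2 + ⟪K u', q⟫ + G u') :
    ‖w‖ ≤ r := by
  by_contra! hrw
  have hw : 0 < ‖w‖ := (norm_nonneg x).trans_lt (hx.trans_lt hrw)
  set δ := min (‖w‖ - r) (τ * (t - b * ‖K‖)) / 2 with hδ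
  have hδ0 : 0 < δ := half_pos (lt_min (by linarith) (mul_pos hτ (by linarith)))
  have hδr : δ < ‖w‖ - r := (half_lt_self (by linarith)).trans_le (min_le_left _ _)
  have hδt : δ ≤ τ * (t - b * ‖K‖) / 2 := by
    have := min_le_right (‖w‖ - r) (τ * (t - b * ‖K‖))
    linarith
  set s := 1 - δ / ‖w‖ with hs
  have hsw : (1 - s) * ‖w‖ = δ := by rw [hs]; field_simp; ring
  have hs0 : 0 < s := by rw [hs, sub_pos, div_lt_one hw]; linarith [hx.trans' (norm_nonneg x)]
  have hs1 : s ≤ 1 := by rw [hs]; linarith [div_pos hδ0 hw]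
  have hsa : a ≤ ‖s • w‖ := by
    rw [norm_smul, Real.norm_of_nonneg hs0.le]; linarith
  have hxw : 0 ≤ ⟪w - x, w⟫ := by
    rw [inner_sub_left, real_inner_self_eq_norm_sq]
    nlinarith [real_inner_le_norm x w]
  have hup := sub_le_of_forall_prox_le hτ hq hxw hs1 hmin
  have hlow := add_mul_norm_le_of_growth hG hs0 hs1 hsa
  rw [hsw] at hup hlow
  have : 1 / (2 * τ) * δ ^ 2 ≤ (t - b * ‖K‖) / 4 * δ := by
    rw [div_mul_eq_mul_div, one_mul, div_le_iff₀ (by positivity)]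
    nlinarith
  nlinarith

end ProxStep

theorem norm_le_max_of_forall_norm_succ_le {E : Type*} [Norm E] {f : ℕ → E} {C : ℝ}
    (h : ∀ n, ‖f (n + 1)‖ ≤ C) : ∀ n, ‖f n‖ ≤ max ‖f 0‖ C
  | 0 => le_max_left _ _
  | n + 1 => (h n).trans (le_max_right _ _)

theorem norm_le_of_eq_add_smul_sub {Y : Type*} [NormedAddCommGroup Y] [NormedSpace ℝ Y]
    {σ : ℝ} {q q' k g : Y} (hσ : 0 < σ) (h : q' = q + σ • (k - g)) :
    ‖g‖ ≤ ‖k‖ + (‖q'‖ + ‖q‖) / σ := by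
  have hg : g = k - σ⁻¹ • (q' - q) := by
    rw [h, add_sub_cancel_left, smul_smul, inv_mul_cancel₀ hσ.ne', one_smul, sub_sub_cancel]
  calc ‖g‖ = ‖k - σ⁻¹ • (q' - q)‖ := by rw [hg]
    _ ≤ ‖k‖ + ‖σ⁻¹ • (q' - q)‖ := norm_sub_le _ _
    _ = ‖k‖ + ‖q' - q‖ / σ := by
        rw [norm_smul, Real.norm_of_nonneg (inv_pos.2 hσ).le, inv_mul_eq_div]
    _ ≤ ‖k‖ + (‖q'‖ + ‖q‖) / σ := by gcongr; exact norm_sub_le _ _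

theorem norm_add_smul_sub_le {X : Type*} [NormedAddCommGroup X] [NormedSpace ℝ X] {x y : X}
    {r : ℝ} (θ : ℝ) (hx : ‖x‖ ≤ r) (hy : ‖y‖ ≤ r) : ‖x + θ • (x - y)‖ ≤ (1 + 2 * |θ|) * r :=
  calc ‖x + θ • (x - y)‖ ≤ ‖x‖ + ‖θ • (x - y)‖ := norm_add_le _ _
    _ = ‖x‖ + |θ| * ‖x - y‖ := by rw [norm_smul, Real.norm_eq_abs]
    _ ≤ ‖x‖ + |θ| * (‖x‖ + ‖y‖) := by gcongr; exact norm_sub_le _ _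
    _ ≤ (1 + 2 * |θ|) * r := by nlinarith [abs_nonneg θ]

theorem pdhg_iterates_bounded_general
    {X Y : Type*} [NormedAddCommGroup X] [InnerProductSpace ℝ X] [FiniteDimensional ℝ X]
    [NormedAddCommGroup Y] [InnerProductSpace ℝ Y] [FiniteDimensional ℝ Y]
    (K : X →L[ℝ] Y) (F : Y → ℝ) (G : X → ℝ) (b a t σ τ θ : ℝ)
    (hF_diff : Differentiable ℝ F) (hb : ∀ g : Y, ‖gradient F g‖ ≤ b)
    (ht : t > b * ‖K‖)
    (hG_growth : ∀ u : X, ‖u‖ ≥ a → ∀ ε : ℝ, 0 ≤ ε →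
      G ((1 + ε) • u) ≥ G u + t * ε * ‖u‖)
    (hτ : 0 < τ) (hσ : 0 < σ)
    (u : ℕ → X) (g q : ℕ → Y) (ubar : ℕ → X)
    (hg : ∀ n, ∀ g' : Y,
      σ / 2 * ‖g (n + 1) - K (ubar n)‖ ^ 2 - (inner ℝ (g (n + 1)) (q n) : ℝ) + F (g (n + 1)) ≤
        σ / 2 * ‖g' - K (ubar n)‖ ^ 2 - (inner ℝ g' (q n) : ℝ) + F g')
    (hq : ∀ n, q (n + 1) = q n + σ • (K (ubar n) - g (n + 1)))
    (hu : ∀ n, ∀ u' : X,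
      1 / (2 * τ) * ‖u (n + 1) - u n‖ ^ 2 + (inner ℝ (K (u (n + 1))) (q (n + 1)) : ℝ)
          + G (u (n + 1)) ≤
        1 / (2 * τ) * ‖u' - u n‖ ^ 2 + (inner ℝ (K u') (q (n + 1)) : ℝ) + G u')
    (hubar : ∀ n, ubar (n + 1) = u (n + 1) + θ • (u (n + 1) - u n)) :
    (∃ M : ℝ, ∀ n, ‖u n‖ ≤ M ∧ ‖q n‖ ≤ M ∧ ‖g n‖ ≤ M) ∧
    (∃ φ : ℕ → ℕ, StrictMono φ ∧ ∃ (uhat : X) (ghat qhat : Y),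
      Filter.Tendsto (u ∘ φ) Filter.atTop (nhds uhat) ∧
      Filter.Tendsto (g ∘ φ) Filter.atTop (nhds ghat) ∧
      Filter.Tendsto (q ∘ φ) Filter.atTop (nhds qhat)) := by
  have hq_succ : ∀ n, ‖q (n + 1)‖ ≤ b := fun n ↦ by
    rw [hq n, ← gradient_eq_of_forall_prox_le (hF_diff _) (hg n)]
    exact hb _
  set r := max a ‖u 0‖
  have hu_le : ∀ n, ‖u n‖ ≤ r := by
    intro n
    induction n with
    | zero => exact le_max_right _ _
    | succ n ih =>
      exact norm_le_of_forall_prox_le hτ ht (hq_succ n) hG_growth (le_max_left _ _) ih (hu n)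
  have hq_le := norm_le_max_of_forall_norm_succ_le hq_succ
  have hubar_le := norm_le_max_of_forall_norm_succ_le fun n ↦
    (hubar n).symm ▸ norm_add_smul_sub_le θ (hu_le (n + 1)) (hu_le n)
  set Q := max ‖q 0‖ b
  set B := max ‖ubar 0‖ ((1 + 2 * |θ|) * r)
  have hg_le := norm_le_max_of_forall_norm_succ_le (C := ‖K‖ * B + (Q + Q) / σ) fun n ↦
    (norm_le_of_eq_add_smul_sub hσ (hq n)).trans <| by
      gcongr
      exacts [K.le_opNorm_of_le (hubar_le n), hq_le (n + 1), hq_le n]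
  set M := max r (max Q (max ‖g 0‖ (‖K‖ * B + (Q + Q) / σ)))
  have hM : ∀ n, ‖(u n, q n, g n)‖ ≤ M := fun n ↦ by
    simp only [Prod.norm_def]
    exact max_le_max (hu_le n) (max_le_max (hq_le n) (hg_le n))
  refine ⟨⟨M, fun n ↦ ⟨(norm_fst_le _).trans (hM n),
    (norm_fst_le (q n, g n)).trans ((norm_snd_le _).trans (hM n)),
    (norm_snd_le (q n, g n)).trans ((norm_snd_le _).trans (hM n))⟩⟩, ?_⟩
  obtain ⟨l, -, φ, hφ, hlim⟩ := tendsto_subseq_of_bounded Metric.isBounded_closedBall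
    fun n ↦ mem_closedBall_zero_iff.2 (hM n)
  exact ⟨φ, hφ, l.1, l.2.2, l.2.1, hlim.fst_nhds, hlim.snd_nhds.snd_nhds,
    hlim.snd_nhds.fst_nhds⟩

/-- Boundedness of the PDHG iterates: if `‖∇F‖ ≤ b` and `G` satisfies the growth condition
`G((1+ε)u) ≥ G(u) + tε‖u‖` for `‖u‖ ≥ a` with `t > b‖K‖`, then the iterates
`(uⁿ, qⁿ, gⁿ)` remain bounded and hence converge along subsequences. -/
theorem pdhg_iterates_bounded
    {X Y : Type*} [NormedAddCommGroup X] [InnerProductSpace ℝ X] [FiniteDimensional ℝ X]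
    [NormedAddCommGroup Y] [InnerProductSpace ℝ Y] [FiniteDimensional ℝ Y]
    (K : X →L[ℝ] Y) (F : Y → ℝ) (G : X → ℝ) (b a t σ τ θ : ℝ)
    (hF_diff : Differentiable ℝ F) (hb : ∀ g : Y, ‖gradient F g‖ ≤ b)
    (ha : 0 < a) (ht : t > b * ‖K‖)
    (hG_growth : ∀ u : X, ‖u‖ ≥ a → ∀ ε : ℝ, 0 ≤ ε →
      G ((1 + ε) • u) ≥ G u + t * ε * ‖u‖)
    (hτ : 0 < τ) (hσ : 0 < σ) (hθ0 : 0 ≤ θ) (hθ1 : θ ≤ 1)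
    (u : ℕ → X) (g q : ℕ → Y) (ubar : ℕ → X)
    (hu0 : ‖u 0‖ < a) (hubar0 : ubar 0 = u 0)
    (hg : ∀ n, ∀ g' : Y,
      σ / 2 * ‖g (n + 1) - K (ubar n)‖ ^ 2 - (inner ℝ (g (n + 1)) (q n) : ℝ) + F (g (n + 1)) ≤
        σ / 2 * ‖g' - K (ubar n)‖ ^ 2 - (inner ℝ g' (q n) : ℝ) + F g')
    (hq : ∀ n, q (n + 1) = q n + σ • (K (ubar n) - g (n + 1)))
    (hu : ∀ n, ∀ u' : X,
      1 / (2 * τ) * ‖u (n + 1) - u n‖ ^ 2 + (inner ℝ (K (u (n + 1))) (q (n + 1)) : ℝ)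
          + G (u (n + 1)) ≤
        1 / (2 * τ) * ‖u' - u n‖ ^ 2 + (inner ℝ (K u') (q (n + 1)) : ℝ) + G u')
    (hubar : ∀ n, ubar (n + 1) = u (n + 1) + θ • (u (n + 1) - u n)) :
    (∃ M : ℝ, ∀ n, ‖u n‖ ≤ M ∧ ‖q n‖ ≤ M ∧ ‖g n‖ ≤ M) ∧
    (∃ φ : ℕ → ℕ, StrictMono φ ∧ ∃ (uhat : X) (ghat qhat : Y),
      Filter.Tendsto (u ∘ φ) Filter.atTop (nhds uhat) ∧
      Filter.Tendsto (g ∘ φ) Filter.atTop (nhds ghat) ∧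
      Filter.Tendsto (q ∘ φ) Filter.atTop (nhds qhat)) :=
  pdhg_iterates_bounded_general K F G b a t σ τ θ hF_diff hb ht hG_growth hτ hσ u g q ubar hg hq hu
    hubar
end

section
/- Suppose the sequences (uⁿ), (gⁿ), (qⁿ) generated by the primal-dual algorithm are bounded, and additionally ‖uⁿ⁺¹ - uⁿ‖ → 0 and ‖qⁿ⁺¹ - qⁿ‖ → 0. Then every accumulation point (û, ĝ, q̂) of the sequence satisfies Kû = ĝ, -Kᵀq̂ ∈ ∂G(û), and q̂ ∈ ∂F(ĝ); consequently 0 ∈ Kᵀ∂F(Kû) + ∂G(û), i.e. û is a critical point of G(u) + F(Ku). -/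
/-!
In finite dimensions, a regular subgradient `ξ` of an `ω`-semiconvex function `F` at `g` is a
global proximal subgradient: `F g + ⟪ξ, ρ - g⟫ - ω/2 ‖ρ - g‖² ≤ F ρ` for all `ρ`. Otherwise
semiconvexity along the segment from `g` to a violating `ρ` keeps the difference quotient below a
negative constant arbitrarily close to `g`. For lower semicontinuous `F` these inequalities pass
to limits, so the graph of the regular subdifferential is closed (`G` is the case `ω = 0`).
The PDHG updates turn `qⁿ⁺¹ - qⁿ → 0` and `uⁿ⁺¹ - uⁿ → 0` into `gⁿ - Kuⁿ → 0`, and the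
optimality conditions at step `n + 1` converge along the subsequence to the claimed inclusions.
-/

open Filter Topology

/-- The regular (Fréchet) subdifferential of `E` at `g`. -/
noncomputable def regSubdiff {X : Type*} [NormedAddCommGroup X] [InnerProductSpace ℝ X]
    (E : X → ℝ) (g : X) : Set X :=
  {ξ | 0 ≤ Filter.liminf
    (fun ρ => (E ρ - E g - (inner ℝ ξ (ρ - g) : ℝ)) / ‖ρ - g‖) (nhdsWithin g {g}ᶜ)}

open Set
open scoped RealInnerProductSpace

theorem Real.liminf_nonneg_of_forall_eventually_ge {α : Type*} {f : Filter α} {u : α → ℝ}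
    (h : ∀ ε > 0, ∀ᶠ x in f, -ε ≤ u x) : 0 ≤ liminf u f := by
  by_cases hcobdd : IsCoboundedUnder (· ≥ ·) f u
  · refine le_of_forall_pos_le_add fun ε hε => ?_
    linarith [le_liminf_of_le hcobdd (h ε hε)]
  · rw [Real.liminf_of_not_isCoboundedUnder hcobdd]

section Subdifferential

variable {X : Type*} [NormedAddCommGroup X] [InnerProductSpace ℝ X]

noncomputable def regSubdiffQuotient (E : X → ℝ) (g ξ ρ : X) : ℝ :=
  (E ρ - E g - ⟪ξ, ρ - g⟫) / ‖ρ - g‖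

theorem mem_regSubdiff_iff {E : X → ℝ} {g ξ : X} :
    ξ ∈ regSubdiff E g ↔ 0 ≤ liminf (regSubdiffQuotient E g ξ) (𝓝[≠] g) :=
  Iff.rfl

def IsProxSubgradient (E : X → ℝ) (c : ℝ) (g ξ : X) : Prop :=
  ∀ ρ, E g + ⟪ξ, ρ - g⟫ - c / 2 * ‖ρ - g‖ ^ 2 ≤ E ρ

theorem IsProxSubgradient.mem_regSubdiff {E : X → ℝ} {c : ℝ} {g ξ : X}
    (h : IsProxSubgradient E c g ξ) : ξ ∈ regSubdiff E g := by
  refine mem_regSubdiff_iff.2 <| Real.liminf_nonneg_of_forall_eventually_ge fun ε hε => ?_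
  have hlim : Tendsto (fun ρ => -(c / 2 * ‖ρ - g‖)) (𝓝[≠] g) (𝓝 0) := by
    have : Continuous fun ρ => -(c / 2 * ‖ρ - g‖) := by fun_prop
    simpa using (this.tendsto g).mono_left nhdsWithin_le_nhds
  filter_upwards [hlim.eventually (eventually_ge_nhds (neg_lt_zero.2 hε)),
    self_mem_nhdsWithin] with ρ hε hρ
  have hpos : 0 < ‖ρ - g‖ := norm_pos_iff.2 (sub_ne_zero.2 hρ)
  refine hε.trans ?_
  rw [regSubdiffQuotient, le_div_iff₀ hpos]
  nlinarith [h ρ]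

theorem locallyLipschitz_of_convexOn_add_sq [FiniteDimensional ℝ X] {E : X → ℝ} {c : ℝ}
    (hconv : ConvexOn ℝ univ fun x => E x + c / 2 * ‖x‖ ^ 2) : LocallyLipschitz E := by
  intro g
  have hsq : ContDiff ℝ 1 fun x : X => c / 2 * ‖x‖ ^ 2 :=
    contDiff_const.mul (contDiff_norm_sq ℝ)
  obtain ⟨L₁, t₁, ht₁, h₁⟩ := hconv.locallyLipschitz g
  obtain ⟨L₂, t₂, ht₂, h₂⟩ := hsq.locallyLipschitz g
  refine ⟨L₁ + L₂, t₁ ∩ t₂, inter_mem ht₁ ht₂, ?_⟩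
  simpa using (h₁.mono inter_subset_left).sub (h₂.mono inter_subset_right)

theorem LocallyLipschitz.isBoundedUnder_regSubdiffQuotient {E : X → ℝ}
    (hE : LocallyLipschitz E) (g ξ : X) :
    IsBoundedUnder (· ≥ ·) (𝓝[≠] g) (regSubdiffQuotient E g ξ) := by
  obtain ⟨L, t, ht, hL⟩ := hE g
  refine isBoundedUnder_of_eventually_ge (a := -(L + ‖ξ‖)) ?_
  filter_upwards [nhdsWithin_le_nhds ht, self_mem_nhdsWithin] with ρ hρt hρ
  have hpos : 0 < ‖ρ - g‖ := norm_pos_iff.2 (sub_ne_zero.2 hρ)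
  have hLip : |E ρ - E g| ≤ L * ‖ρ - g‖ := by
    simpa [Real.dist_eq, dist_eq_norm] using hL.dist_le_mul ρ hρt g (mem_of_mem_nhds ht)
  have hinner : ⟪ξ, ρ - g⟫ ≤ ‖ξ‖ * ‖ρ - g‖ := real_inner_le_norm ξ (ρ - g)
  rw [regSubdiffQuotient, le_div_iff₀ hpos]
  nlinarith [neg_abs_le (E ρ - E g)]

theorem apply_add_smul_sub_le_of_convexOn_add_sq {E : X → ℝ} {c : ℝ}
    (hconv : ConvexOn ℝ univ fun x => E x + c / 2 * ‖x‖ ^ 2) (x y : X) {s : ℝ}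
    (hs₀ : 0 ≤ s) (hs₁ : s ≤ 1) :
    E (x + s • (y - x)) ≤ E x + s * (E y - E x) + c / 2 * s * (1 - s) * ‖y - x‖ ^ 2 := by
  obtain ⟨w, rfl⟩ : ∃ w, y = x + w := ⟨y - x, by abel⟩
  have hseg := hconv.2 (mem_univ x) (mem_univ (x + w)) (sub_nonneg.2 hs₁) hs₀ (by ring)
  have hpt : (1 - s) • x + s • (x + w) = x + s • w := by module
  simp only [hpt, smul_eq_mul, add_sub_cancel_left] at hseg ⊢
  have hsq : ‖x + s • w‖ ^ 2 = ‖x‖ ^ 2 + 2 * s * ⟪x, w⟫ + s ^ 2 * ‖w‖ ^ 2 := by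
    rw [norm_add_sq_real, real_inner_smul_right, norm_smul, Real.norm_eq_abs, mul_pow, sq_abs]
    ring
  have hsq' : ‖x + w‖ ^ 2 = ‖x‖ ^ 2 + 2 * ⟪x, w⟫ + ‖w‖ ^ 2 := norm_add_sq_real x w
  rw [hsq, hsq'] at hseg
  nlinarith

theorem regSubdiffQuotient_add_smul_le {E : X → ℝ} {c : ℝ}
    (hconv : ConvexOn ℝ univ fun x => E x + c / 2 * ‖x‖ ^ 2) {g ξ ρ : X} (hρ : ρ ≠ g)
    {s : ℝ} (hs₀ : 0 < s) (hs₁ : s ≤ 1) :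
    regSubdiffQuotient E g ξ (g + s • (ρ - g)) ≤
      (E ρ - E g - ⟪ξ, ρ - g⟫ + c / 2 * (1 - s) * ‖ρ - g‖ ^ 2) / ‖ρ - g‖ := by
  have hv : 0 < ‖ρ - g‖ := norm_pos_iff.2 (sub_ne_zero.2 hρ)
  have hseg := apply_add_smul_sub_le_of_convexOn_add_sq hconv g ρ hs₀.le hs₁
  rw [regSubdiffQuotient, add_sub_cancel_left, norm_smul, Real.norm_eq_abs, abs_of_pos hs₀,
    real_inner_smul_right, div_le_div_iff₀ (by positivity) hv]
  nlinarith

theorem IsProxSubgradient.of_mem_regSubdiff [FiniteDimensional ℝ X] {E : X → ℝ} {c : ℝ}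
    (hconv : ConvexOn ℝ univ fun x => E x + c / 2 * ‖x‖ ^ 2) {g ξ : X}
    (h : ξ ∈ regSubdiff E g) : IsProxSubgradient E c g ξ := by
  intro ρ
  by_contra! hlt
  have hρ : ρ ≠ g := by rintro rfl; simp at hlt
  have hv : 0 < ‖ρ - g‖ := norm_pos_iff.2 (sub_ne_zero.2 hρ)
  set A := E ρ - E g - ⟪ξ, ρ - g⟫ + c / 2 * ‖ρ - g‖ ^ 2 with hAdef
  have hA : A < 0 := by linarith
  set b := A / (2 * ‖ρ - g‖)
  have hb : b < 0 := div_neg_of_neg_of_pos hA (by positivity)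
  -- `0 ≤ liminf` carries information only because the quotient is bounded below
  -- (the real `liminf` of a function unbounded below is `0`).
  have hnear : ∀ᶠ x in 𝓝[≠] g, b < regSubdiffQuotient E g ξ x :=
    eventually_lt_of_lt_liminf (hb.trans_le h)
      ((locallyLipschitz_of_convexOn_add_sq hconv).isBoundedUnder_regSubdiffQuotient g ξ)
  have hray : Tendsto (fun s : ℝ => g + s • (ρ - g)) (𝓝[>] 0) (𝓝[≠] g) := by
    refine tendsto_nhdsWithin_of_tendsto_nhds_of_eventually_within _ ?_ ?_
    · have : Continuous fun s : ℝ => g + s • (ρ - g) := by fun_prop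
      simpa using (this.tendsto 0).mono_left nhdsWithin_le_nhds
    · filter_upwards [self_mem_nhdsWithin] with s hs
      simpa [sub_eq_zero] using And.intro (mem_Ioi.1 hs).ne' hρ
  have hbound : ∀ᶠ s in 𝓝[>] (0 : ℝ),
      (E ρ - E g - ⟪ξ, ρ - g⟫ + c / 2 * (1 - s) * ‖ρ - g‖ ^ 2) / ‖ρ - g‖ < b := by
    have hcont : Continuous fun s : ℝ =>
        (E ρ - E g - ⟪ξ, ρ - g⟫ + c / 2 * (1 - s) * ‖ρ - g‖ ^ 2) / ‖ρ - g‖ := by fun_prop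
    refine (hcont.tendsto 0).mono_left nhdsWithin_le_nhds |>.eventually (eventually_lt_nhds ?_)
    rw [sub_zero, mul_one, ← hAdef, div_lt_div_iff₀ hv (by positivity)]
    nlinarith [mul_neg_of_neg_of_pos hA hv]
  have hsmall : ∀ᶠ s in 𝓝[>] (0 : ℝ), s ≤ 1 :=
    nhdsWithin_le_nhds (eventually_le_nhds zero_lt_one)
  obtain ⟨s, hs₀, hs₁, hqs, hbs⟩ :=
    (eventually_mem_nhdsWithin.and (hsmall.and ((hray.eventually hnear).and hbound))).exists
  linarith [regSubdiffQuotient_add_smul_le hconv hρ (ξ := ξ) hs₀ hs₁]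

theorem isClosed_setOf_isProxSubgradient {E : X → ℝ} (hE : LowerSemicontinuous E) (c : ℝ) :
    IsClosed {p : X × X | IsProxSubgradient E c p.1 p.2} := by
  simp only [IsProxSubgradient, ofPred_forall, add_sub_assoc]
  refine isClosed_iInter fun ρ => ?_
  have hlsc : LowerSemicontinuous fun p : X × X =>
      E p.1 + (⟪p.2, ρ - p.1⟫ - c / 2 * ‖ρ - p.1‖ ^ 2) :=
    (hE.comp continuous_fst).add (Continuous.lowerSemicontinuous (by fun_prop))
  exact hlsc.isClosed_preimage (E ρ)

theorem mem_regSubdiff_of_tendsto [FiniteDimensional ℝ X] {E : X → ℝ} {c : ℝ}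
    (hE : LowerSemicontinuous E) (hconv : ConvexOn ℝ univ fun x => E x + c / 2 * ‖x‖ ^ 2)
    {ι : Type*} {l : Filter ι} [l.NeBot] {x ξ : ι → X} {x₀ ξ₀ : X}
    (hx : Tendsto x l (𝓝 x₀)) (hξ : Tendsto ξ l (𝓝 ξ₀))
    (hmem : ∀ i, ξ i ∈ regSubdiff E (x i)) :
    ξ₀ ∈ regSubdiff E x₀ :=
  IsProxSubgradient.mem_regSubdiff <|
    (isClosed_setOf_isProxSubgradient hE c).mem_of_tendsto (hx.prodMk_nhds hξ) <|
      .of_forall fun i => .of_mem_regSubdiff hconv (hmem i)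

end Subdifferential

theorem tendsto_comp_add_one_of_tendsto_sub {X : Type*} [AddCommGroup X] [TopologicalSpace X]
    [IsTopologicalAddGroup X] {x : ℕ → X} {φ : ℕ → ℕ} {a : X}
    (hφ : Tendsto φ atTop atTop) (hx : Tendsto (x ∘ φ) atTop (𝓝 a))
    (hdx : Tendsto (fun n => x (n + 1) - x n) atTop (𝓝 0)) :
    Tendsto (fun n => x (φ n + 1)) atTop (𝓝 a) := by
  simpa using hx.add (hdx.comp hφ)

theorem Filter.Tendsto.of_tendsto_sub_map {X Y : Type*} [TopologicalSpace X] [AddCommGroup Y]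
    [TopologicalSpace Y] [IsTopologicalAddGroup Y] {f : X → Y} {ι : Type*} {l : Filter ι}
    {x : ι → X} {y : ι → Y} {a : X} (hx : Tendsto x l (𝓝 a)) (hf : ContinuousAt f a)
    (hyx : Tendsto (fun i => y i - f (x i)) l (𝓝 0)) : Tendsto y l (𝓝 (f a)) := by
  simpa using hyx.add (hf.tendsto.comp hx)

theorem pdhg_tendsto_sub_apply {X Y : Type*} [AddCommGroup X] [Module ℝ X] [TopologicalSpace X]
    [AddCommGroup Y] [Module ℝ Y] [TopologicalSpace Y] [IsTopologicalAddGroup Y]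
    [ContinuousConstSMul ℝ Y] {K : X →L[ℝ] Y} {σ θ : ℝ} (hσ : σ ≠ 0)
    {u ubar : ℕ → X} {g q : ℕ → Y}
    (hq : ∀ n, q (n + 1) = q n + σ • (K (ubar n) - g (n + 1)))
    (hubar : ∀ n, ubar (n + 1) = u (n + 1) + θ • (u (n + 1) - u n))
    (hdu : Tendsto (fun n => u (n + 1) - u n) atTop (𝓝 0))
    (hdq : Tendsto (fun n => q (n + 1) - q n) atTop (𝓝 0)) :
    Tendsto (fun n => g n - K (u n)) atTop (𝓝 0) := by
  have hKdu : Tendsto (fun n => K (u (n + 1) - u n)) atTop (𝓝 0) := by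
    simpa only [Function.comp_def, map_zero] using (K.continuous.tendsto 0).comp hdu
  have hgap : ∀ n, g (n + 2) - K (u (n + 2)) = θ • K (u (n + 1) - u n)
      - K (u (n + 2) - u (n + 1)) - σ⁻¹ • (q (n + 2) - q (n + 1)) := by
    intro n
    rw [hq (n + 1), hubar n, add_sub_cancel_left, smul_smul, inv_mul_cancel₀ hσ, one_smul]
    simp only [map_add, map_sub, map_smul]
    abel
  -- `ubar 0` is unconstrained, hence the shift by two.
  refine (tendsto_add_atTop_iff_nat 2).1 ?_
  simp only [hgap]
  simpa using ((hKdu.const_smul θ).sub ((tendsto_add_atTop_iff_nat 1).2 hKdu)).sub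
    (((tendsto_add_atTop_iff_nat 1).2 hdq).const_smul σ⁻¹)

theorem pdhg_subsequential_convergence_to_critical_points_general
    {X Y : Type*} [NormedAddCommGroup X] [InnerProductSpace ℝ X] [FiniteDimensional ℝ X]
    [NormedAddCommGroup Y] [InnerProductSpace ℝ Y] [FiniteDimensional ℝ Y]
    (K : X →L[ℝ] Y) (F : Y → ℝ) (G : X → ℝ) (ω σ τ θ : ℝ)
    (hF_lsc : LowerSemicontinuous F)
    (hF_semiconvex : ConvexOn ℝ Set.univ (fun g => F g + ω / 2 * ‖g‖ ^ 2))
    (hG_lsc : LowerSemicontinuous G) (hG_convex : ConvexOn ℝ Set.univ G)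
    (hσ : 0 < σ)
    (u : ℕ → X) (g q : ℕ → Y) (ubar : ℕ → X)
    (hoptF : ∀ n, q n - σ • (g (n + 1) - K (ubar n)) ∈ regSubdiff F (g (n + 1)))
    (hq : ∀ n, q (n + 1) = q n + σ • (K (ubar n) - g (n + 1)))
    (hoptG : ∀ n, -(τ⁻¹ • (u (n + 1) - u n)) - (ContinuousLinearMap.adjoint K) (q (n + 1))
      ∈ regSubdiff G (u (n + 1)))
    (hubar : ∀ n, ubar (n + 1) = u (n + 1) + θ • (u (n + 1) - u n))
    (hdu : Filter.Tendsto (fun n => ‖u (n + 1) - u n‖) Filter.atTop (nhds 0))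
    (hdq : Filter.Tendsto (fun n => ‖q (n + 1) - q n‖) Filter.atTop (nhds 0)) :
    ∀ (φ : ℕ → ℕ), StrictMono φ → ∀ (uhat : X) (ghat qhat : Y),
      Filter.Tendsto (u ∘ φ) Filter.atTop (nhds uhat) →
      Filter.Tendsto (g ∘ φ) Filter.atTop (nhds ghat) →
      Filter.Tendsto (q ∘ φ) Filter.atTop (nhds qhat) →
      K uhat = ghat ∧
      -(ContinuousLinearMap.adjoint K) qhat ∈ regSubdiff G uhat ∧
      qhat ∈ regSubdiff F ghat ∧
      (∃ p ∈ regSubdiff F (K uhat), ∃ r ∈ regSubdiff G uhat,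
        (ContinuousLinearMap.adjoint K) p + r = 0) := by
  intro φ hφ uhat ghat qhat hu hg hqφ
  have hφ' := hφ.tendsto_atTop
  have hdu' := tendsto_zero_iff_norm_tendsto_zero.2 hdu
  have hdq' := tendsto_zero_iff_norm_tendsto_zero.2 hdq
  have hgap := pdhg_tendsto_sub_apply hσ.ne' hq hubar hdu' hdq'
  have hu₁ := tendsto_comp_add_one_of_tendsto_sub hφ' hu hdu'
  have hq₁ := tendsto_comp_add_one_of_tendsto_sub hφ' hqφ hdq'
  have hKu : K uhat = ghat :=
    tendsto_nhds_unique (hu.of_tendsto_sub_map K.continuous.continuousAt (hgap.comp hφ')) hg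
  have hg₁ : Tendsto (fun n => g (φ n + 1)) atTop (𝓝 (K uhat)) :=
    hu₁.of_tendsto_sub_map K.continuous.continuousAt
      (hgap.comp (tendsto_add_atTop_nat 1 |>.comp hφ'))
  have hqF : ∀ n, q (n + 1) ∈ regSubdiff F (g (n + 1)) := fun n => by
    convert hoptF n using 1
    rw [hq n, smul_sub, smul_sub]
    abel
  have hF : qhat ∈ regSubdiff F (K uhat) :=
    mem_regSubdiff_of_tendsto hF_lsc hF_semiconvex hg₁ hq₁ fun n => hqF (φ n)
  have hξG : Tendsto (fun n => -(τ⁻¹ • (u (φ n + 1) - u (φ n)))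
      - (ContinuousLinearMap.adjoint K) (q (φ n + 1))) atTop
      (𝓝 (-(ContinuousLinearMap.adjoint K) qhat)) := by
    simpa using ((hdu'.comp hφ').const_smul τ⁻¹).neg.sub
      ((ContinuousLinearMap.adjoint K).continuous.tendsto qhat |>.comp hq₁)
  have hG : -(ContinuousLinearMap.adjoint K) qhat ∈ regSubdiff G uhat :=
    mem_regSubdiff_of_tendsto hG_lsc (c := 0) (by simpa using hG_convex) hu₁ hξG
      fun n => hoptG (φ n)
  exact ⟨hKu, hG, hKu ▸ hF, qhat, hF, _, hG, add_neg_cancel _⟩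

/-- If the PDHG sequences are bounded and successive differences of `uⁿ` and `qⁿ` vanish,
then every accumulation point `(û, ĝ, q̂)` satisfies `Kû = ĝ`, `-Kᵀq̂ ∈ ∂G(û)`,
`q̂ ∈ ∂F(ĝ)`, and hence `0 ∈ Kᵀ∂F(Kû) + ∂G(û)`, i.e. `û` is a critical point of
`G(u) + F(Ku)`. -/
theorem pdhg_subsequential_convergence_to_critical_points
    {X Y : Type*} [NormedAddCommGroup X] [InnerProductSpace ℝ X] [FiniteDimensional ℝ X]
    [NormedAddCommGroup Y] [InnerProductSpace ℝ Y] [FiniteDimensional ℝ Y]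
    (K : X →L[ℝ] Y) (F : Y → ℝ) (G : X → ℝ) (ω σ τ θ : ℝ)
    (hF_lsc : LowerSemicontinuous F)
    (hF_semiconvex : ConvexOn ℝ Set.univ (fun g => F g + ω / 2 * ‖g‖ ^ 2))
    (hG_lsc : LowerSemicontinuous G) (hG_convex : ConvexOn ℝ Set.univ G)
    (hσω : σ > ω) (hτ : 0 < τ) (hσ : 0 < σ) (hθ0 : 0 ≤ θ) (hθ1 : θ ≤ 1)
    (u : ℕ → X) (g q : ℕ → Y) (ubar : ℕ → X)
    (hubar0 : ubar 0 = u 0)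
    (hoptF : ∀ n, q n - σ • (g (n + 1) - K (ubar n)) ∈ regSubdiff F (g (n + 1)))
    (hq : ∀ n, q (n + 1) = q n + σ • (K (ubar n) - g (n + 1)))
    (hoptG : ∀ n, -(τ⁻¹ • (u (n + 1) - u n)) - (ContinuousLinearMap.adjoint K) (q (n + 1))
      ∈ regSubdiff G (u (n + 1)))
    (hubar : ∀ n, ubar (n + 1) = u (n + 1) + θ • (u (n + 1) - u n))
    (hbdd_u : ∃ M, ∀ n, ‖u n‖ ≤ M) (hbdd_g : ∃ M, ∀ n, ‖g n‖ ≤ M)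
    (hbdd_q : ∃ M, ∀ n, ‖q n‖ ≤ M)
    (hdu : Filter.Tendsto (fun n => ‖u (n + 1) - u n‖) Filter.atTop (nhds 0))
    (hdq : Filter.Tendsto (fun n => ‖q (n + 1) - q n‖) Filter.atTop (nhds 0)) :
    ∀ (φ : ℕ → ℕ), StrictMono φ → ∀ (uhat : X) (ghat qhat : Y),
      Filter.Tendsto (u ∘ φ) Filter.atTop (nhds uhat) →
      Filter.Tendsto (g ∘ φ) Filter.atTop (nhds ghat) →
      Filter.Tendsto (q ∘ φ) Filter.atTop (nhds qhat) →
      K uhat = ghat ∧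
      -(ContinuousLinearMap.adjoint K) qhat ∈ regSubdiff G uhat ∧
      qhat ∈ regSubdiff F ghat ∧
      (∃ p ∈ regSubdiff F (K uhat), ∃ r ∈ regSubdiff G uhat,
        (ContinuousLinearMap.adjoint K) p + r = 0) :=
  pdhg_subsequential_convergence_to_critical_points_general K F G ω σ τ θ hF_lsc hF_semiconvex
    hG_lsc hG_convex hσ u g q ubar hoptF hq hoptG hubar hdu hdq
end

section
/- The smoothed truncated quadratic R̂(t) defined by R̂(t) = αt² for t < s₁, R̂(t) = A(t-s₂)³ + B(t-s₂)² + C for s₁ ≤ t ≤ s₂, and R̂(t) = λ for t > s₂, with s₁ = √(λ/α) - ε, s₂ = √(λ/α) + ε, A = -α/(4ε), B = -α(2√(λ/α) + ε)/(4ε), C = λ, and ε = ε₀√(λ/α), is ω-semiconvex with ω = α(2 + ε₀)/(2ε₀); i.e. t ↦ R̂(t) + (ω/2)t² is convex on ℝ. -/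
open Filter Set

/-!
Adding `ω/2 · t²` makes each piece of `R̂` convex: the second derivatives become `2α + ω`,
`6A(t - s₂) + 2B + ω ≥ 2B + ω = 0` on the cubic piece (as `A < 0` and `t ≤ s₂`), and `ω`.
The spline is `C¹` (values and slopes agree at `s₁` and `s₂`), so the derivative of
`R̂ + ω/2 · t²` is glued from monotone pieces that agree at the junctions, hence is monotone.
-/

theorem hasDerivAt_ite_le {f g f' g' : ℝ → ℝ} {a : ℝ}
    (hf : ∀ x, HasDerivAt f (f' x) x) (hg : ∀ x, HasDerivAt g (g' x) x)
    (hfg : f a = g a) (hfg' : f' a = g' a) (x : ℝ) :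
    HasDerivAt (fun t => if t ≤ a then f t else g t) (if x ≤ a then f' x else g' x) x := by
  rcases lt_trichotomy x a with hxa | rfl | hax
  · rw [if_pos hxa.le]
    exact (hf x).congr_of_eventuallyEq <|
      eventually_of_mem (Iio_mem_nhds hxa) fun t ht => if_pos (le_of_lt ht)
  · rw [if_pos le_rfl]
    have hleft : HasDerivWithinAt (fun t => if t ≤ x then f t else g t) (f' x) (Iic x) x :=
      (hf x).hasDerivWithinAt.congr (fun t ht => if_pos ht) (if_pos le_rfl)
    have hright : HasDerivWithinAt (fun t => if t ≤ x then f t else g t) (f' x) (Ici x) x := by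
      refine hfg' ▸ (hg x).hasDerivWithinAt.congr (fun t ht => ?_) (by simp [hfg])
      rcases eq_or_lt_of_le (mem_Ici.1 ht) with rfl | hxt
      · simp [hfg]
      · exact if_neg (not_le.2 hxt)
    simpa [Iic_union_Ici, hasDerivWithinAt_univ] using hleft.union hright
  · rw [if_neg (not_le.2 hax)]
    exact (hg x).congr_of_eventuallyEq <|
      eventually_of_mem (Ioi_mem_nhds hax) fun t ht => if_neg (not_le.2 ht)

theorem monotone_ite_le {α β : Type*} [LinearOrder α] [Preorder β] {f g : α → β} {a : α}
    (hf : MonotoneOn f (Iic a)) (hg : MonotoneOn g (Ici a)) (hfg : f a = g a) :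
    Monotone fun t => if t ≤ a then f t else g t := by
  refine (hf.congr fun t ht => (if_pos ht).symm).Iic_union_Ici (hg.congr fun t ht => ?_)
  rcases eq_or_lt_of_le (mem_Ici.1 ht) with rfl | hat
  · simp [hfg]
  · exact (if_neg (not_le.2 hat)).symm

theorem convexOn_univ_of_hasDerivAt_of_monotone {f f' : ℝ → ℝ}
    (hf : ∀ x, HasDerivAt f (f' x) x) (hf' : Monotone f') : ConvexOn ℝ univ f :=
  Monotone.convexOn_univ_of_deriv (fun x => (hf x).differentiableAt)
    (funext (fun x => (hf x).deriv) ▸ hf')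

theorem convexOn_univ_cubicSpline_add_sq {α ω s₁ s₂ A B C : ℝ}
    (hα : 0 ≤ 2 * α + ω) (hω : 0 ≤ ω) (hA : A ≤ 0) (hB : 0 ≤ 2 * B + ω) (hs : s₁ ≤ s₂)
    (hval : α * s₁ ^ 2 = A * (s₁ - s₂) ^ 3 + B * (s₁ - s₂) ^ 2 + C)
    (hslope : 2 * α * s₁ = 3 * A * (s₁ - s₂) ^ 2 + 2 * B * (s₁ - s₂)) :
    ConvexOn ℝ univ fun t =>
      (if t < s₁ then α * t ^ 2 else if t ≤ s₂ then A * (t - s₂) ^ 3 + B * (t - s₂) ^ 2 + C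
        else C) + ω / 2 * t ^ 2 := by
  have hpow (c b : ℝ) (n : ℕ) (x : ℝ) :
      HasDerivAt (fun t => c * (t - b) ^ n) (c * (n * (x - b) ^ (n - 1))) x :=
    ((hasDerivAt_pow n (x - b)).comp_sub_const x b).const_mul c
  have hleft (x : ℝ) : HasDerivAt (fun t => α * t ^ 2 + ω / 2 * t ^ 2) ((2 * α + ω) * x) x :=
    (((hasDerivAt_pow 2 x).const_mul α).add ((hasDerivAt_pow 2 x).const_mul (ω / 2))).congr_deriv
      (by push_cast; ring)
  have hmid (x : ℝ) : HasDerivAt (fun t => A * (t - s₂) ^ 3 + B * (t - s₂) ^ 2 + C + ω / 2 * t ^ 2)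
      (3 * A * (x - s₂) ^ 2 + 2 * B * (x - s₂) + ω * x) x :=
    ((((hpow A s₂ 3 x).add (hpow B s₂ 2 x)).add_const C).add
      ((hasDerivAt_pow 2 x).const_mul (ω / 2))).congr_deriv (by push_cast; ring)
  have hright (x : ℝ) : HasDerivAt (fun t => C + ω / 2 * t ^ 2) (ω * x) x :=
    (((hasDerivAt_pow 2 x).const_mul (ω / 2)).const_add C).congr_deriv (by push_cast; ring)
  have hmid_mono :
      MonotoneOn (fun x => 3 * A * (x - s₂) ^ 2 + 2 * B * (x - s₂) + ω * x) (Iic s₂) := by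
    intro u hu v hv huv
    -- `q v - q u = (v - u) * (3A(u + v - 2s₂) + 2B + ω)`
    have hconv : 0 ≤ 3 * A * (u + v - 2 * s₂) + (2 * B + ω) := by
      nlinarith [mem_Iic.1 hu, mem_Iic.1 hv]
    nlinarith [mul_nonneg (sub_nonneg.2 huv) hconv]
  have hglue : (fun t => (if t < s₁ then α * t ^ 2 else if t ≤ s₂ then
      A * (t - s₂) ^ 3 + B * (t - s₂) ^ 2 + C else C) + ω / 2 * t ^ 2) =
      fun t => if t ≤ s₁ then α * t ^ 2 + ω / 2 * t ^ 2 else if t ≤ s₂ then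
      A * (t - s₂) ^ 3 + B * (t - s₂) ^ 2 + C + ω / 2 * t ^ 2 else C + ω / 2 * t ^ 2 := by
    ext t
    rcases lt_trichotomy t s₁ with h | rfl | h
    · simp [h, h.le]
    · simp [hs, hval]
    · rw [if_neg h.not_gt, if_neg h.not_ge]
      split_ifs <;> rfl
  have hinner_deriv := hasDerivAt_ite_le (a := s₂) hmid hright (by simp) (by simp)
  have hinner_mono := monotone_ite_le (a := s₂) hmid_mono
    ((monotone_id.const_mul hω).monotoneOn _) (by simp)
  rw [hglue]
  refine convexOn_univ_of_hasDerivAt_of_monotone (hasDerivAt_ite_le hleft hinner_deriv ?_ ?_)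
    (monotone_ite_le ((monotone_id.const_mul hα).monotoneOn _) (hinner_mono.monotoneOn _) ?_)
  · simp [hs, hval]
  all_goals simp only [if_pos hs]; linear_combination hslope

theorem smoothed_truncated_quadratic_semiconvex_general
    (α lam ε₀ ε s₁ s₂ A B C ω : ℝ)
    (hα : 0 < α) (hlam : 0 < lam) (hε₀ : 0 < ε₀)
    (hε : ε = ε₀ * Real.sqrt (lam / α))
    (hs₁ : s₁ = Real.sqrt (lam / α) - ε) (hs₂ : s₂ = Real.sqrt (lam / α) + ε)
    (hA : A = -(α / (4 * ε))) (hB : B = -(α * (2 * Real.sqrt (lam / α) + ε) / (4 * ε)))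
    (hC : C = lam)
    (hω : ω = α * (2 + ε₀) / (2 * ε₀))
    (R : ℝ → ℝ)
    (hR : ∀ t : ℝ, R t =
      if t < s₁ then α * t ^ 2
      else if t ≤ s₂ then A * (t - s₂) ^ 3 + B * (t - s₂) ^ 2 + C
      else lam) :
    ConvexOn ℝ Set.univ (fun t => R t + ω / 2 * t ^ 2) := by
  have hσ : 0 < √(lam / α) := Real.sqrt_pos.2 (div_pos hlam hα)
  have hασ : α * √(lam / α) ^ 2 = lam := by
    rw [Real.sq_sqrt (div_pos hlam hα).le]; field_simp
  have hεpos : 0 < ε := hε ▸ mul_pos hε₀ hσ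
  simp only [hR]
  subst C s₁ s₂ A B ω
  apply convexOn_univ_cubicSpline_add_sq
  · positivity
  · positivity
  · exact neg_nonpos.2 (by positivity)
  · exact le_of_eq (by rw [hε]; field_simp; ring)
  · linarith
  · field_simp; linear_combination (4 * ε) * hασ
  · field_simp; ring

/-- The smoothed truncated quadratic regularizer (cubic-spline smoothing of
`min {λ, αt²}`) is `ω`-semiconvex with `ω = α(2 + ε₀)/(2ε₀)`. -/
theorem smoothed_truncated_quadratic_semiconvex
    (α lam ε₀ ε s₁ s₂ A B C ω : ℝ)
    (hα : 0 < α) (hlam : 0 < lam) (hε₀ : 0 < ε₀) (hε₀1 : ε₀ < 1)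
    (hε : ε = ε₀ * Real.sqrt (lam / α))
    (hs₁ : s₁ = Real.sqrt (lam / α) - ε) (hs₂ : s₂ = Real.sqrt (lam / α) + ε)
    (hA : A = -(α / (4 * ε))) (hB : B = -(α * (2 * Real.sqrt (lam / α) + ε) / (4 * ε)))
    (hC : C = lam)
    (hω : ω = α * (2 + ε₀) / (2 * ε₀))
    (R : ℝ → ℝ)
    (hR : ∀ t : ℝ, R t =
      if t < s₁ then α * t ^ 2
      else if t ≤ s₂ then A * (t - s₂) ^ 3 + B * (t - s₂) ^ 2 + C
      else lam) :
    ConvexOn ℝ Set.univ (fun t => R t + ω / 2 * t ^ 2) :=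
  smoothed_truncated_quadratic_semiconvex_general α lam ε₀ ε s₁ s₂ A B C ω hα hlam hε₀ hε hs₁ hs₂ hA
    hB hC hω R hR
end

section
/- Error-propagation identity: Let (uⁿ, gⁿ, qⁿ) and (vⁿ, ρⁿ, ξⁿ) be two sequences both satisfying the optimality conditions of the primal-dual algorithm (with selected subgradients), and set u_eⁿ = uⁿ - vⁿ, g_eⁿ = gⁿ - ρⁿ, q_eⁿ = qⁿ - ξⁿ. Then 0 = (1/2τ)(‖u_eⁿ⁺¹‖² - ‖u_eⁿ‖²) + (1/2σ)(‖q_eⁿ⁺¹‖² - ‖q_eⁿ‖²) + ⟨q_eⁿ⁺¹, Ku_eⁿ⁺¹⟩ - ⟨q_eⁿ, Kū_eⁿ⟩ + (1/2τ)‖u_eⁿ⁺¹ - u_eⁿ‖² - (σθ/2)(‖Ku_eⁿ‖² - ‖Ku_eⁿ⁻¹‖²) - (σ(θ+θ²)/2)‖Ku_eⁿ - Ku_eⁿ⁻¹‖² + ⟨∂G(uⁿ⁺¹) - ∂G(vⁿ⁺¹), uⁿ⁺¹ - vⁿ⁺¹⟩ - (σ/2)‖Ku_eⁿ‖² + ⟨∂F(gⁿ⁺¹)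 - ∂F(ρⁿ⁺¹), gⁿ⁺¹ - ρⁿ⁺¹⟩ + (σ/2)‖g_eⁿ⁺¹‖². -/
open Filter Topology

/-! The errors `u_e, g_e, q_e` obey the optimality conditions with the subgradients replaced by
their differences, so the identity is linear algebra in the error variables. It is the sum of
three facts: the primal condition tested with `u_eⁿ⁺¹`, via `2⟪a - b, a⟫ = ‖a‖² - ‖b‖² + ‖a - b‖²`;
the expansion of `‖q_eⁿ⁺¹‖²` through the dual update, which collapses to `(σ/2)‖Kū_eⁿ‖²`;
and the expansion of `‖Kū_eⁿ‖²` for the extrapolation `ū_eⁿ = u_eⁿ + θ(u_eⁿ - u_eⁿ⁻¹)`. -/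

open ContinuousLinearMap

section InnerProductSpace

variable {X Y : Type*}

lemma norm_extrapolate_sq [SeminormedAddCommGroup Y] [InnerProductSpace ℝ Y] (θ : ℝ) (a b : Y) :
    ‖a + θ • (a - b)‖ ^ 2
      = ‖a‖ ^ 2 + θ * (‖a‖ ^ 2 - ‖b‖ ^ 2) + (θ + θ ^ 2) * ‖a - b‖ ^ 2 := by
  simp only [← real_inner_self_eq_norm_sq, inner_add_left, inner_add_right, inner_sub_left,
    inner_sub_right, real_inner_smul_left, real_inner_smul_right, real_inner_comm a b]
  ring

lemma pdhg_dual_step_energy [SeminormedAddCommGroup Y] [InnerProductSpace ℝ Y] {σ : ℝ}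
    (hσ : σ ≠ 0) {q₁ q₂ w g : Y} (hq : q₂ = q₁ + σ • (w - g)) :
    1 / (2 * σ) * (‖q₂‖ ^ 2 - ‖q₁‖ ^ 2) - inner ℝ q₁ w + inner ℝ q₂ g + σ / 2 * ‖g‖ ^ 2
      = σ / 2 * ‖w‖ ^ 2 := by
  subst hq
  simp only [← real_inner_self_eq_norm_sq, inner_add_left, inner_add_right, inner_sub_left,
    inner_sub_right, real_inner_smul_left, real_inner_smul_right, real_inner_comm q₁,
    real_inner_comm w g]
  field_simp
  ring

lemma pdhg_primal_step_energy [NormedAddCommGroup X] [InnerProductSpace ℝ X] [CompleteSpace X]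
    [NormedAddCommGroup Y] [InnerProductSpace ℝ Y] [CompleteSpace Y] (K : X →L[ℝ] Y) {τ : ℝ}
    {u₁ u₂ d : X} {q : Y} (hopt : (0 : X) = τ⁻¹ • (u₂ - u₁) + adjoint K q + d) :
    1 / (2 * τ) * (‖u₂‖ ^ 2 - ‖u₁‖ ^ 2) + 1 / (2 * τ) * ‖u₂ - u₁‖ ^ 2
      + inner ℝ q (K u₂) + inner ℝ d u₂ = 0 := by
  have hd : d = -(τ⁻¹ • (u₂ - u₁)) - adjoint K q := by
    linear_combination (norm := module) -hopt
  rw [hd, norm_sub_sq_real]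
  simp only [inner_sub_left, inner_neg_left, real_inner_smul_left, adjoint_inner_left,
    real_inner_self_eq_norm_sq, real_inner_comm u₁]
  ring

end InnerProductSpace

theorem pdhg_error_propagation_identity_general
    {X Y : Type*} [NormedAddCommGroup X] [InnerProductSpace ℝ X] [FiniteDimensional ℝ X]
    [NormedAddCommGroup Y] [InnerProductSpace ℝ Y] [FiniteDimensional ℝ Y]
    (K : X →L[ℝ] Y) (σ τ θ : ℝ)
    (hσ : 0 < σ)
    (u : ℕ → X) (g q : ℕ → Y) (ubar : ℕ → X) (dG : ℕ → X) (dF : ℕ → Y)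
    (v : ℕ → X) (ρ ξ : ℕ → Y) (vbar : ℕ → X) (dG' : ℕ → X) (dF' : ℕ → Y)
    (hopt1F : ∀ n, (0 : Y) = σ • (g (n + 1) - K (ubar n)) + dF (n + 1) - q n)
    (hq1 : ∀ n, q (n + 1) = q n + σ • (K (ubar n) - g (n + 1)))
    (hopt1G : ∀ n, (0 : X) = τ⁻¹ • (u (n + 1) - u n)
      + (ContinuousLinearMap.adjoint K) (q (n + 1)) + dG (n + 1))
    (hubar1 : ∀ n, ubar (n + 1) = u (n + 1) + θ • (u (n + 1) - u n))
    (hopt2F : ∀ n, (0 : Y) = σ • (ρ (n + 1) - K (vbar n)) + dF' (n + 1) - ξ n)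
    (hq2 : ∀ n, ξ (n + 1) = ξ n + σ • (K (vbar n) - ρ (n + 1)))
    (hopt2G : ∀ n, (0 : X) = τ⁻¹ • (v (n + 1) - v n)
      + (ContinuousLinearMap.adjoint K) (ξ (n + 1)) + dG' (n + 1))
    (hvbar1 : ∀ n, vbar (n + 1) = v (n + 1) + θ • (v (n + 1) - v n)) :
    ∀ m : ℕ,
      (0 : ℝ) =
        1 / (2 * τ) * (‖u (m + 2) - v (m + 2)‖ ^ 2 - ‖u (m + 1) - v (m + 1)‖ ^ 2)
        + 1 / (2 * σ) * (‖q (m + 2) - ξ (m + 2)‖ ^ 2 - ‖q (m + 1) - ξ (m + 1)‖ ^ 2)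
        + (inner ℝ (q (m + 2) - ξ (m + 2)) (K (u (m + 2) - v (m + 2))) : ℝ)
        - (inner ℝ (q (m + 1) - ξ (m + 1)) (K (ubar (m + 1) - vbar (m + 1))) : ℝ)
        + 1 / (2 * τ) * ‖(u (m + 2) - v (m + 2)) - (u (m + 1) - v (m + 1))‖ ^ 2
        - σ * θ / 2 * (‖K (u (m + 1) - v (m + 1))‖ ^ 2 - ‖K (u m - v m)‖ ^ 2)
        - σ * (θ + θ ^ 2) / 2 * ‖K (u (m + 1) - v (m + 1)) - K (u m - v m)‖ ^ 2
        + (inner ℝ (dG (m + 2) - dG' (m + 2)) (u (m + 2) - v (m + 2)) : ℝ)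
        - σ / 2 * ‖K (u (m + 1) - v (m + 1))‖ ^ 2
        + (inner ℝ (dF (m + 2) - dF' (m + 2)) (g (m + 2) - ρ (m + 2)) : ℝ)
        + σ / 2 * ‖g (m + 2) - ρ (m + 2)‖ ^ 2 := by
  intro m
  have hq_err : q (m + 2) - ξ (m + 2) = (q (m + 1) - ξ (m + 1))
      + σ • (K (ubar (m + 1) - vbar (m + 1)) - (g (m + 2) - ρ (m + 2))) := by
    rw [hq1, hq2, map_sub]; module
  have hdF_err : dF (m + 2) - dF' (m + 2) = q (m + 2) - ξ (m + 2) := by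
    rw [hq1, hq2]; linear_combination (norm := module) -hopt1F (m + 1) + hopt2F (m + 1)
  have hopt_err : (0 : X) = τ⁻¹ • ((u (m + 2) - v (m + 2)) - (u (m + 1) - v (m + 1)))
      + adjoint K (q (m + 2) - ξ (m + 2)) + (dG (m + 2) - dG' (m + 2)) := by
    rw [map_sub]; linear_combination (norm := module) hopt1G (m + 1) - hopt2G (m + 1)
  have hubar_err : K (ubar (m + 1) - vbar (m + 1))
      = K (u (m + 1) - v (m + 1)) + θ • (K (u (m + 1) - v (m + 1)) - K (u m - v m)) := by
    rw [hubar1, hvbar1, ← map_sub, ← map_smul, ← map_add]; congr 1; module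
  have hprimal := pdhg_primal_step_energy K hopt_err
  have hdual := pdhg_dual_step_energy hσ.ne' hq_err
  have hext := norm_extrapolate_sq θ (K (u (m + 1) - v (m + 1))) (K (u m - v m))
  rw [← hubar_err] at hext
  rw [hdF_err]
  linear_combination -hprimal - hdual - σ / 2 * hext

/-- Error-propagation identity (Lemma 3 of the paper): for two sequences
`(uⁿ, gⁿ, qⁿ)` and `(vⁿ, ρⁿ, ξⁿ)` both satisfying the optimality conditions of the
PDHG algorithm with selected subgradients `dG, dF` resp. `dG', dF'`, the error
variables `u_eⁿ = uⁿ - vⁿ`, `g_eⁿ = gⁿ - ρⁿ`, `q_eⁿ = qⁿ - ξⁿ` satisfy the stated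
algebraic identity. -/
theorem pdhg_error_propagation_identity
    {X Y : Type*} [NormedAddCommGroup X] [InnerProductSpace ℝ X] [FiniteDimensional ℝ X]
    [NormedAddCommGroup Y] [InnerProductSpace ℝ Y] [FiniteDimensional ℝ Y]
    (K : X →L[ℝ] Y) (F : Y → ℝ) (G : X → ℝ) (σ τ θ : ℝ)
    (hτ : 0 < τ) (hσ : 0 < σ) (hθ0 : 0 ≤ θ) (hθ1 : θ ≤ 1)
    (u : ℕ → X) (g q : ℕ → Y) (ubar : ℕ → X) (dG : ℕ → X) (dF : ℕ → Y)
    (v : ℕ → X) (ρ ξ : ℕ → Y) (vbar : ℕ → X) (dG' : ℕ → X) (dF' : ℕ → Y)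
    (hdF : ∀ n, dF (n + 1) ∈ regSubdiff F (g (n + 1)))
    (hdG : ∀ n, dG (n + 1) ∈ regSubdiff G (u (n + 1)))
    (hdF' : ∀ n, dF' (n + 1) ∈ regSubdiff F (ρ (n + 1)))
    (hdG' : ∀ n, dG' (n + 1) ∈ regSubdiff G (v (n + 1)))
    (hopt1F : ∀ n, (0 : Y) = σ • (g (n + 1) - K (ubar n)) + dF (n + 1) - q n)
    (hq1 : ∀ n, q (n + 1) = q n + σ • (K (ubar n) - g (n + 1)))
    (hopt1G : ∀ n, (0 : X) = τ⁻¹ • (u (n + 1) - u n)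
      + (ContinuousLinearMap.adjoint K) (q (n + 1)) + dG (n + 1))
    (hubar1 : ∀ n, ubar (n + 1) = u (n + 1) + θ • (u (n + 1) - u n))
    (hopt2F : ∀ n, (0 : Y) = σ • (ρ (n + 1) - K (vbar n)) + dF' (n + 1) - ξ n)
    (hq2 : ∀ n, ξ (n + 1) = ξ n + σ • (K (vbar n) - ρ (n + 1)))
    (hopt2G : ∀ n, (0 : X) = τ⁻¹ • (v (n + 1) - v n)
      + (ContinuousLinearMap.adjoint K) (ξ (n + 1)) + dG' (n + 1))
    (hvbar1 : ∀ n, vbar (n + 1) = v (n + 1) + θ • (v (n + 1) - v n)) :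
    ∀ m : ℕ,
      (0 : ℝ) =
        1 / (2 * τ) * (‖u (m + 2) - v (m + 2)‖ ^ 2 - ‖u (m + 1) - v (m + 1)‖ ^ 2)
        + 1 / (2 * σ) * (‖q (m + 2) - ξ (m + 2)‖ ^ 2 - ‖q (m + 1) - ξ (m + 1)‖ ^ 2)
        + (inner ℝ (q (m + 2) - ξ (m + 2)) (K (u (m + 2) - v (m + 2))) : ℝ)
        - (inner ℝ (q (m + 1) - ξ (m + 1)) (K (ubar (m + 1) - vbar (m + 1))) : ℝ)
        + 1 / (2 * τ) * ‖(u (m + 2) - v (m + 2)) - (u (m + 1) - v (m + 1))‖ ^ 2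
        - σ * θ / 2 * (‖K (u (m + 1) - v (m + 1))‖ ^ 2 - ‖K (u m - v m)‖ ^ 2)
        - σ * (θ + θ ^ 2) / 2 * ‖K (u (m + 1) - v (m + 1)) - K (u m - v m)‖ ^ 2
        + (inner ℝ (dG (m + 2) - dG' (m + 2)) (u (m + 2) - v (m + 2)) : ℝ)
        - σ / 2 * ‖K (u (m + 1) - v (m + 1))‖ ^ 2
        + (inner ℝ (dF (m + 2) - dF' (m + 2)) (g (m + 2) - ρ (m + 2)) : ℝ)
        + σ / 2 * ‖g (m + 2) - ρ (m + 2)‖ ^ 2 :=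
  pdhg_error_propagation_identity_general K σ τ θ hσ u g q ubar dG dF v ρ ξ vbar dG' dF' hopt1F hq1
    hopt1G hubar1 hopt2F hq2 hopt2G hvbar1
end
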